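/- arXiv:math/0006210 — 7 statements merged into one kernel-verified Lean document; each statement's English description precedes it below -/
import Mathlib

section
/- Let ρ_m⁺: R³ → Hom(V_m, V_{m+2}) be defined by ρ_m⁺(e₁/2)z^k_m = i z^{k+1}_{m+2}, ρ_m⁺(e₂/2 + ie₃/2)z^k_m = -z^k_{m+2}, ρ_m⁺(e₂/2 - ie₃/2)z^k_m = -z^{k+2}_{m+2}, and ρ_m⁻: R³ → Hom(V_m, V_{m-2}) by ρ_m⁻(e₁/2)z^k_m = ik(m-k)z^{k-1}_{m-2}, ρ_m⁻(e₂/2 + ie₃/2)z^k_m = k(k-1)z^{k-2}_{m-2}, ρ_m⁻(e₂/2 - ie₃/2)z^k_m = (m-k)(m-k-1)z^k_{m-2}. Then with respect to the inner products making v_n^k = z_n^k/√(k!(n-k)!) orthonormal on each V_n, the adjoint of ρ_m⁺(X) equals -ρ_{m+2}⁻(X) for each X in R³. -/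
open Complex Matrix Finset

-- `V_m` is modelled as coefficient vectors `Fin (m+1) → ℂ` w.r.t. the basis `z^0, …, z^m`.

/-- The Clifford homomorphism `ρ_m⁰ : ℝ³ → End(V_m)`, as the matrix of the operator determined
by `ρ_m⁰(e₁/2)z^k = i(k-m/2)z^k`, `ρ_m⁰(e₂/2+ie₃/2)z^k = -k z^{k-1}`,
`ρ_m⁰(e₂/2-ie₃/2)z^k = (m-k)z^{k+1}`, extended real-linearly in `X = (X₁,X₂,X₃)`. -/
noncomputable def rho0 (m : ℕ) (X : ℝ × ℝ × ℝ) : Matrix (Fin (m + 1)) (Fin (m + 1)) ℂ :=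
  fun j k =>
    (X.1 : ℂ) * (Complex.I * (2 * (k.val : ℂ) - (m : ℂ))) * (if j.val = k.val then 1 else 0)
    + (X.2.1 : ℂ) * ((if j.val + 1 = k.val then -(k.val : ℂ) else 0)
        + (if j.val = k.val + 1 then (m : ℂ) - (k.val : ℂ) else 0))
    + (X.2.2 : ℂ) * ((if j.val + 1 = k.val then Complex.I * (k.val : ℂ) else 0)
        + (if j.val = k.val + 1 then Complex.I * ((m : ℂ) - (k.val : ℂ)) else 0))

/-- The raising Clifford homomorphism `ρ_m⁺ : ℝ³ → Hom(V_m, V_{m+2})`, determined by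
`ρ_m⁺(e₁/2)z^k = i z^{k+1}`, `ρ_m⁺(e₂/2+ie₃/2)z^k = -z^k`, `ρ_m⁺(e₂/2-ie₃/2)z^k = -z^{k+2}`. -/
noncomputable def rhoPlus (m : ℕ) (X : ℝ × ℝ × ℝ) : Matrix (Fin (m + 3)) (Fin (m + 1)) ℂ :=
  fun j k =>
    (X.1 : ℂ) * (if j.val = k.val + 1 then 2 * Complex.I else 0)
    + (X.2.1 : ℂ) * ((if j.val = k.val then -1 else 0) + (if j.val = k.val + 2 then -1 else 0))
    + (X.2.2 : ℂ) * ((if j.val = k.val then Complex.I else 0)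
        + (if j.val = k.val + 2 then -Complex.I else 0))

/-- The lowering Clifford homomorphism `ρ_{m+2}⁻ : ℝ³ → Hom(V_{m+2}, V_m)`, determined (with
`M = m+2`) by `ρ⁻(e₁/2)z^k = ik(M-k)z^{k-1}`, `ρ⁻(e₂/2+ie₃/2)z^k = k(k-1)z^{k-2}`,
`ρ⁻(e₂/2-ie₃/2)z^k = (M-k)(M-k-1)z^k`. -/
noncomputable def rhoMinus (m : ℕ) (X : ℝ × ℝ × ℝ) : Matrix (Fin (m + 1)) (Fin (m + 3)) ℂ :=
  fun j k =>
    (X.1 : ℂ) * (if j.val + 1 = k.val then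
        2 * Complex.I * (k.val : ℂ) * ((m : ℂ) + 2 - (k.val : ℂ)) else 0)
    + (X.2.1 : ℂ) * ((if j.val + 2 = k.val then (k.val : ℂ) * ((k.val : ℂ) - 1) else 0)
        + (if j.val = k.val then
            ((m : ℂ) + 2 - (k.val : ℂ)) * ((m : ℂ) + 1 - (k.val : ℂ)) else 0))
    + (X.2.2 : ℂ) * ((if j.val + 2 = k.val then
          -Complex.I * (k.val : ℂ) * ((k.val : ℂ) - 1) else 0)
        + (if j.val = k.val then
            Complex.I * ((m : ℂ) + 2 - (k.val : ℂ)) * ((m : ℂ) + 1 - (k.val : ℂ)) else 0))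

/-- The Lie bracket on `ℝ³ ≅ su(2)` obtained by identifying `eⱼ ↔ σⱼ` (Pauli matrices),
so that `[e₁,e₂] = 2e₃` cyclically. -/
def bracket3 (X Y : ℝ × ℝ × ℝ) : ℝ × ℝ × ℝ :=
  (2 * (X.2.1 * Y.2.2 - X.2.2 * Y.2.1),
   2 * (X.2.2 * Y.1 - X.1 * Y.2.2),
   2 * (X.1 * Y.2.1 - X.2.1 * Y.1))

/-- The standard inner product on `ℝ³`. -/
def inner3 (X Y : ℝ × ℝ × ℝ) : ℝ := X.1 * Y.1 + X.2.1 * Y.2.1 + X.2.2 * Y.2.2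

/-- The inner product on `V_m` in which `v_m^k = z^k/√(k!(m-k)!)` is an orthonormal basis,
i.e. `⟨z^j, z^k⟩ = k!(m-k)! δ_{jk}`; antilinear in the second argument. -/
noncomputable def ipV (m : ℕ) (u v : Fin (m + 1) → ℂ) : ℂ :=
  ∑ k : Fin (m + 1), ((Nat.factorial k.val : ℂ) * (Nat.factorial (m - k.val) : ℂ))
    * u k * (starRingEnd ℂ) (v k)

lemma rhoPlus_adjoint_key (m : ℕ) (X : ℝ × ℝ × ℝ) (j : Fin (m+3)) (k : Fin (m+1)) :
    ((Nat.factorial j.val : ℂ) * (Nat.factorial (m+2-j.val) : ℂ)) * rhoPlus m X j k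
    = -(((Nat.factorial k.val : ℂ) * (Nat.factorial (m-k.val) : ℂ))
        * (starRingEnd ℂ) (rhoMinus m X k j)) := by
  obtain ⟨a, ha⟩ := j; obtain ⟨b, hb⟩ := k
  have hb' : b ≤ m := by omega
  have cmb : ((m - b : ℕ) : ℂ) = (m : ℂ) - b := by push_cast [hb']; ring
  simp only [rhoPlus, rhoMinus]
  by_cases h1 : a = b + 1
  · subst h1
    have e1 : m + 2 - (b + 1) = (m - b) + 1 := by omega
    simp [show ¬ (b + 1 = b) by omega, show ¬ (b + 1 = b + 2) by omega,
      show ¬ (b + 2 = b + 1) by omega, e1, Nat.factorial_succ, _root_.map_mul, map_add,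
      map_ofNat, Complex.conj_ofReal, Complex.conj_I, cmb]
    ring
  · by_cases h2 : a = b
    · subst h2
      have e1 : m + 2 - a = ((m - a) + 1) + 1 := by omega
      simp [show ¬ (a = a + 1) by omega, show ¬ (a = a + 2) by omega,
        show ¬ (a + 1 = a) by omega, show ¬ (a + 2 = a) by omega, e1,
        Nat.factorial_succ, _root_.map_mul, map_add, map_ofNat, Complex.conj_ofReal,
        Complex.conj_I, cmb]
      ring
    · by_cases h3 : a = b + 2
      · subst h3
        have e1 : m + 2 - (b + 2) = m - b := by omega
        simp [show ¬ (b + 2 = b + 1) by omega, show ¬ (b + 2 = b) by omega,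
          show ¬ (b + 1 = b + 2) by omega, e1, Nat.factorial_succ, _root_.map_mul,
          map_add, map_ofNat, Complex.conj_ofReal, Complex.conj_I, cmb]
        ring
      · simp [h1, h2, h3, show ¬ (b + 1 = a) by omega, show ¬ (b + 2 = a) by omega,
          show ¬ (b = a) by omega]

/-- the adjoint of `ρ_m⁺(X) : V_m → V_{m+2}` with respect to the inner products
making `v_n^k = z_n^k/√(k!(n-k)!)` orthonormal is `-ρ_{m+2}⁻(X)`, for every `X ∈ ℝ³`. -/
theorem rhoPlus_adjoint (m : ℕ) (X : ℝ × ℝ × ℝ) (u : Fin (m + 1) → ℂ)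
    (v : Fin (m + 3) → ℂ) :
    ipV (m + 2) ((rhoPlus m X).mulVec u) v = ipV m u (-(rhoMinus m X).mulVec v) := by
  have L : ipV (m + 2) ((rhoPlus m X).mulVec u) v
      = ∑ j : Fin (m + 3), ∑ k : Fin (m + 1),
        (((Nat.factorial j.val : ℂ) * (Nat.factorial (m + 2 - j.val) : ℂ))
          * rhoPlus m X j k) * (u k * (starRingEnd ℂ) (v j)) := by
    unfold ipV Matrix.mulVec
    refine Finset.sum_congr rfl fun j _ => ?_
    simp only [dotProduct, Finset.mul_sum, Finset.sum_mul]
    exact Finset.sum_congr rfl fun k _ => by ring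
  have R : ipV m u (-(rhoMinus m X).mulVec v)
      = ∑ k : Fin (m + 1), ∑ j : Fin (m + 3),
        (-(((Nat.factorial k.val : ℂ) * (Nat.factorial (m - k.val) : ℂ))
          * (starRingEnd ℂ) (rhoMinus m X k j))) * (u k * (starRingEnd ℂ) (v j)) := by
    unfold ipV Matrix.mulVec
    refine Finset.sum_congr rfl fun k _ => ?_
    simp only [Pi.neg_apply, dotProduct, map_neg, map_sum, _root_.map_mul,
      Finset.mul_sum, mul_neg, neg_mul]
    rw [← Finset.sum_neg_distrib]
    exact Finset.sum_congr rfl fun j _ => by ring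
  rw [L, R, Finset.sum_comm]
  exact Finset.sum_congr rfl fun k _ => Finset.sum_congr rfl fun j _ => by
    rw [rhoPlus_adjoint_key]
end

section
/- With the Clifford homomorphisms ρ_m⁰, ρ_m⁺, ρ_m⁻ as defined via the explicit formulas on basis vectors z^k, for all X, Y in R³ ≅ su(2) (identifying eⱼ with σⱼ) the relation ρ_{m+2}⁰(X)ρ_m⁺(Y) - ρ_m⁺(X)ρ_m⁰(Y) = ((m+2)/2)·ρ_m⁺([X,Y]) holds as linear maps from V_m to V_{m+2}, where [X,Y] is the Lie bracket in su(2) transported to R³. -/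
open Complex Matrix Finset

lemma sum_delta {n : ℕ} (F : ℕ → ℂ) (c : ℂ) (t : ℕ) (ht : t < n) :
    (∑ l : Fin n, F l.val * (if l.val = t then c else 0)) = F t * c := by
  rw [Finset.sum_eq_single (⟨t, ht⟩ : Fin n)]
  · simp
  · intro b _ hb
    rw [if_neg, mul_zero]
    intro h; exact hb (Fin.ext h)
  · intro h; exact absurd (Finset.mem_univ _) h

lemma sum_delta_lo {n : ℕ} (F : ℕ → ℂ) (c : ℂ) (t : ℕ) (ht : t ≤ n) :
    (∑ l : Fin n, F l.val * (if l.val + 1 = t then (t : ℂ) * c else 0))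
      = F (t - 1) * ((t : ℂ) * c) := by
  rcases t with _ | t
  · simp
  · rw [Finset.sum_eq_single (⟨t, by omega⟩ : Fin n)]
    · simp
    · intro b _ hb
      rw [if_neg, mul_zero]
      intro h; exact hb (Fin.ext (by simpa using h))
    · intro h; exact absurd (Finset.mem_univ _) h

lemma sum_delta_hi {m : ℕ} (F : ℕ → ℂ) (c : ℂ) (t : ℕ) (ht : t ≤ m) :
    (∑ l : Fin (m + 1), F l.val * (if l.val = t + 1 then ((m : ℂ) - (t : ℂ)) * c else 0))
      = F (t + 1) * (((m : ℂ) - (t : ℂ)) * c) := by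
  rcases eq_or_lt_of_le ht with rfl | ht
  · have h0 : ∀ l : Fin (t + 1), (if l.val = t + 1 then ((t : ℂ) - (t : ℂ)) * c else 0) = 0 := by
      intro l; rw [if_neg (by omega)]
    simp
  · exact sum_delta F _ _ (by omega)

noncomputable def rho0x (m : ℕ) (X : ℝ × ℝ × ℝ) (j k : ℕ) : ℂ :=
  (X.1 : ℂ) * (Complex.I * (2 * (k : ℂ) - (m : ℂ))) * (if j = k then 1 else 0)
  + (X.2.1 : ℂ) * ((if j + 1 = k then -(k : ℂ) else 0)
      + (if j = k + 1 then (m : ℂ) - (k : ℂ) else 0))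
  + (X.2.2 : ℂ) * ((if j + 1 = k then Complex.I * (k : ℂ) else 0)
      + (if j = k + 1 then Complex.I * ((m : ℂ) - (k : ℂ)) else 0))

noncomputable def rhoPx (X : ℝ × ℝ × ℝ) (j k : ℕ) : ℂ :=
  (X.1 : ℂ) * (if j = k + 1 then 2 * Complex.I else 0)
  + (X.2.1 : ℂ) * ((if j = k then -1 else 0) + (if j = k + 2 then -1 else 0))
  + (X.2.2 : ℂ) * ((if j = k then Complex.I else 0) + (if j = k + 2 then -Complex.I else 0))

lemma sumB (m : ℕ) (Y : ℝ × ℝ × ℝ) (F : ℕ → ℂ) (k : Fin (m + 1)) :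
    (∑ l : Fin (m + 3), F l.val * rhoPlus m Y l k)
    = F (k.val + 1) * ((Y.1 : ℂ) * (2 * Complex.I))
    + F k.val * (-(Y.2.1 : ℂ) + (Y.2.2 : ℂ) * Complex.I)
    + F (k.val + 2) * (-(Y.2.1 : ℂ) - (Y.2.2 : ℂ) * Complex.I) := by
  have h : ∀ l : Fin (m + 3), F l.val * rhoPlus m Y l k
      = F l.val * (if l.val = k.val + 1 then (Y.1 : ℂ) * (2 * Complex.I) else 0)
      + (F l.val * (if l.val = k.val then -(Y.2.1 : ℂ) + (Y.2.2 : ℂ) * Complex.I else 0)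
      + F l.val * (if l.val = k.val + 2 then -(Y.2.1 : ℂ) - (Y.2.2 : ℂ) * Complex.I else 0)) := by
    intro l
    unfold rhoPlus
    split_ifs <;> first | ring | (exfalso; omega)
  rw [Finset.sum_congr rfl fun l _ => h l, Finset.sum_add_distrib, Finset.sum_add_distrib,
    sum_delta F _ _ (by have := k.isLt; omega), sum_delta F _ _ (by have := k.isLt; omega),
    sum_delta F _ _ (by have := k.isLt; omega)]
  ring

lemma sumB2 (m : ℕ) (Y : ℝ × ℝ × ℝ) (F : ℕ → ℂ) (k : Fin (m + 1)) :
    (∑ l : Fin (m + 1), F l.val * rho0 m Y l k)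
    = F k.val * ((Y.1 : ℂ) * (Complex.I * (2 * (k.val : ℂ) - (m : ℂ))))
    + F (k.val - 1) * ((k.val : ℂ) * (-(Y.2.1 : ℂ) + (Y.2.2 : ℂ) * Complex.I))
    + F (k.val + 1) * (((m : ℂ) - (k.val : ℂ)) * ((Y.2.1 : ℂ) + (Y.2.2 : ℂ) * Complex.I)) := by
  have h : ∀ l : Fin (m + 1), F l.val * rho0 m Y l k
      = F l.val * (if l.val = k.val then
          (Y.1 : ℂ) * (Complex.I * (2 * (k.val : ℂ) - (m : ℂ))) else 0)
      + (F l.val * (if l.val + 1 = k.val then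
          (k.val : ℂ) * (-(Y.2.1 : ℂ) + (Y.2.2 : ℂ) * Complex.I) else 0)
      + F l.val * (if l.val = k.val + 1 then
          ((m : ℂ) - (k.val : ℂ)) * ((Y.2.1 : ℂ) + (Y.2.2 : ℂ) * Complex.I) else 0)) := by
    intro l
    unfold rho0
    split_ifs <;> first | ring | (exfalso; omega)
  rw [Finset.sum_congr rfl fun l _ => h l, Finset.sum_add_distrib, Finset.sum_add_distrib,
    sum_delta F _ _ (by have := k.isLt; omega),
    sum_delta_lo F _ _ (by have := k.isLt; omega),
    sum_delta_hi F _ _ (by have := k.isLt; omega)]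
  ring

/-- `ρ_{m+2}⁰(X)ρ_m⁺(Y) - ρ_m⁺(X)ρ_m⁰(Y) = ((m+2)/2)·ρ_m⁺([X,Y])`
as linear maps `V_m → V_{m+2}`, for all `X, Y ∈ ℝ³ ≅ su(2)`. -/
theorem clifford_relation_plus (m : ℕ) (X Y : ℝ × ℝ × ℝ) :
    rho0 (m + 2) X * rhoPlus m Y - rhoPlus m X * rho0 m Y
      = (((m : ℂ) + 2) / 2) • rhoPlus m (bracket3 X Y) := by
  funext i k
  have e1 : (rho0 (m + 2) X * rhoPlus m Y) i k
      = ∑ l : Fin (m + 3), (fun t => rho0x (m + 2) X i.val t) l.val * rhoPlus m Y l k := rfl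
  have e2 : (rhoPlus m X * rho0 m Y) i k
      = ∑ l : Fin (m + 1), (fun t => rhoPx X i.val t) l.val * rho0 m Y l k := rfl
  rw [Matrix.sub_apply, e1, e2, sumB, sumB2, Matrix.smul_apply]
  rcases i with ⟨a, ha⟩
  rcases k with ⟨b, hb⟩
  simp only [rho0x, rhoPx, rhoPlus, bracket3, smul_eq_mul]
  clear e1 e2
  rcases b with _ | b
  · -- column 0
    rcases a with _ | _ | _ | _ | a <;> simp [add_assoc] <;> ((try push_cast); ring_nf; try (simp only [Complex.I_sq]; ring))
  · -- column b + 1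
    have hc : a + 2 ≤ b + 1 ∨ a + 1 = b + 1 ∨ a = b + 1 ∨ a = b + 2 ∨ a = b + 3 ∨
        a = b + 4 ∨ b + 5 ≤ a := by omega
    rcases hc with hc | hc | hc | hc | hc | hc | hc
    · have h1 : a ≠ b := by omega
      have h2 : a ≠ b + 1 := by omega
      have h3 : a ≠ b + 2 := by omega
      have h4 : a ≠ b + 3 := by omega
      have h5 : a ≠ b + 4 := by omega
      simp [add_assoc, h1, h2, h3, h4, h5]
    · obtain rfl : a = b := by omega
      simp [add_assoc] <;> ((try push_cast); ring_nf; try (simp only [Complex.I_sq]; ring))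
    · obtain rfl : a = b + 1 := by omega
      simp [add_assoc] <;> ((try push_cast); ring_nf; try (simp only [Complex.I_sq]; ring))
    · obtain rfl : a = b + 2 := by omega
      simp [add_assoc] <;> ((try push_cast); ring_nf; try (simp only [Complex.I_sq]; ring))
    · obtain rfl : a = b + 3 := by omega
      simp [add_assoc] <;> ((try push_cast); ring_nf; try (simp only [Complex.I_sq]; ring))
    · obtain rfl : a = b + 4 := by omega
      simp [add_assoc] <;> ((try push_cast); ring_nf; try (simp only [Complex.I_sq]; ring))
    · have h1 : a ≠ b := by omega
      have h2 : a ≠ b + 1 := by omega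
      have h3 : a ≠ b + 2 := by omega
      have h4 : a ≠ b + 3 := by omega
      have h5 : a ≠ b + 4 := by omega
      simp [add_assoc, h1, h2, h3, h4, h5]
end

section
/- With the Clifford homomorphisms as defined via the explicit basis formulas, for all X, Y in R³ the relation ρ_{m-2}⁰(X)ρ_m⁻(Y) - ρ_m⁻(X)ρ_m⁰(Y) = -(m/2)·ρ_m⁻([X,Y]) holds as linear maps from V_m to V_{m-2} (for m ≥ 2). -/
open Complex Matrix Finset

private lemma pinL {N : ℕ} (c : ℕ) (f : Fin N → ℂ) :
    (∑ x : Fin N, if c = x.val then f x else 0) = if h : c < N then f ⟨c, h⟩ else 0 := by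
  split_ifs with h
  · rw [Finset.sum_eq_single ⟨c, h⟩]
    · simp
    · intro x _ hx
      rw [if_neg]
      intro hc
      exact hx (Fin.ext hc.symm)
    · simp
  · exact Finset.sum_eq_zero fun x _ => by rw [if_neg]; omega

private lemma pinR {N : ℕ} (c : ℕ) (f : Fin N → ℂ) :
    (∑ x : Fin N, if x.val = c then f x else 0) = if h : c < N then f ⟨c, h⟩ else 0 := by
  split_ifs with h
  · rw [Finset.sum_eq_single ⟨c, h⟩]
    · simp
    · intro x _ hx
      rw [if_neg]
      intro hc
      exact hx (Fin.ext hc)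
    · simp
  · exact Finset.sum_eq_zero fun x _ => by rw [if_neg]; omega

private lemma cond1 (x : ℕ) : (x + 1 = 0) = False := eq_false (by omega)
private lemma cond2 (x : ℕ) : (x + 2 = 0) = False := eq_false (by omega)
private lemma cond3 (x : ℕ) : (0 = x + 1) = False := eq_false (by omega)
private lemma cond4 (x : ℕ) : (0 = x + 2) = False := eq_false (by omega)
private lemma cond5 (x : ℕ) : (x + 1 = 1) = (x = 0) := propext (by omega)
private lemma cond6 (x : ℕ) : (x + 2 = 1) = False := eq_false (by omega)
private lemma cond7 (x : ℕ) : (1 = x + 2) = False := eq_false (by omega)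
private lemma cond8 (x b : ℕ) : (x + 1 = b + 2) = (x = b + 1) := propext (by omega)
private lemma cond9 (x b : ℕ) : (x + 2 = b + 2) = (x = b) := propext (by omega)
private lemma cond10 (x b : ℕ) : (b + 2 = x + 1) = (b + 1 = x) := propext (by omega)
private lemma cond11 (x : ℕ) : (1 = x + 1) = (0 = x) := propext (by omega)

set_option maxHeartbeats 4000000

/-- for `m ≥ 2` (written `m = n + 2`),
`ρ_{m-2}⁰(X)ρ_m⁻(Y) - ρ_m⁻(X)ρ_m⁰(Y) = -(m/2)·ρ_m⁻([X,Y])`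
as linear maps `V_m → V_{m-2}`, for all `X, Y ∈ ℝ³`. -/
theorem clifford_relation_minus (n : ℕ) (X Y : ℝ × ℝ × ℝ) :
    rho0 n X * rhoMinus n Y - rhoMinus n X * rho0 (n + 2) Y
      = (-(((n : ℂ) + 2) / 2)) • rhoMinus n (bracket3 X Y) := by
  ext i k
  obtain ⟨a, ha⟩ := i
  obtain ⟨b, hb⟩ := k
  simp only [Matrix.sub_apply, Matrix.mul_apply, Matrix.smul_apply, rho0, rhoMinus, bracket3,
    smul_eq_mul]
  match a, ha, b, hb with
  | 0, ha, 0, hb =>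
    simp only [ite_mul, mul_ite, mul_zero, zero_mul, mul_one, add_mul, mul_add, zero_add,
      add_left_inj, cond1, cond2, cond3, cond4, cond5, cond6, cond7, cond8, cond9, cond10,
      cond11, if_false, Finset.sum_add_distrib, Finset.sum_const_zero, pinL, pinR]
    split_ifs <;> first
      | (exfalso; omega)
      | (subst_vars; push_cast; (try ring_nf); (try (simp only [Complex.I_sq])); (try push_cast); (try ring_nf); done)
      | (rcases Nat.eq_zero_or_pos n with rfl | hn <;> first
          | (exfalso; omega)
          | (subst_vars; push_cast; (try ring_nf); (try (simp only [Complex.I_sq])); (try push_cast); (try ring_nf); done))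
  | 0, ha, 1, hb =>
    simp only [ite_mul, mul_ite, mul_zero, zero_mul, mul_one, add_mul, mul_add, zero_add,
      add_left_inj, cond1, cond2, cond3, cond4, cond5, cond6, cond7, cond8, cond9, cond10,
      cond11, if_false, Finset.sum_add_distrib, Finset.sum_const_zero, pinL, pinR]
    split_ifs <;> first
      | (exfalso; omega)
      | (subst_vars; push_cast; (try ring_nf); (try (simp only [Complex.I_sq])); (try push_cast); (try ring_nf); done)
      | (rcases Nat.eq_zero_or_pos n with rfl | hn <;> first
          | (exfalso; omega)
          | (subst_vars; push_cast; (try ring_nf); (try (simp only [Complex.I_sq])); (try push_cast); (try ring_nf); done))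
  | 0, ha, b + 2, hb =>
    simp only [ite_mul, mul_ite, mul_zero, zero_mul, mul_one, add_mul, mul_add, zero_add,
      add_left_inj, cond1, cond2, cond3, cond4, cond5, cond6, cond7, cond8, cond9, cond10,
      cond11, if_false, Finset.sum_add_distrib, Finset.sum_const_zero, pinL, pinR]
    split_ifs <;> first
      | (exfalso; omega)
      | (subst_vars; push_cast; (try ring_nf); (try (simp only [Complex.I_sq])); (try push_cast); (try ring_nf); done)
      | (rcases Nat.eq_zero_or_pos n with rfl | hn <;> first
          | (exfalso; omega)
          | (subst_vars; push_cast; (try ring_nf); (try (simp only [Complex.I_sq])); (try push_cast); (try ring_nf); done))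
  | a + 1, ha, 0, hb =>
    simp only [ite_mul, mul_ite, mul_zero, zero_mul, mul_one, add_mul, mul_add, zero_add,
      add_left_inj, cond1, cond2, cond3, cond4, cond5, cond6, cond7, cond8, cond9, cond10,
      cond11, if_false, Finset.sum_add_distrib, Finset.sum_const_zero, pinL, pinR]
    split_ifs <;> first
      | (exfalso; omega)
      | (subst_vars; push_cast; (try ring_nf); (try (simp only [Complex.I_sq])); (try push_cast); (try ring_nf); done)
      | (rcases eq_or_ne n (a + 1) with rfl | hn <;> first
          | (exfalso; omega)
          | (subst_vars; push_cast; (try ring_nf); (try (simp only [Complex.I_sq])); (try push_cast); (try ring_nf); done))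
  | a + 1, ha, 1, hb =>
    simp only [ite_mul, mul_ite, mul_zero, zero_mul, mul_one, add_mul, mul_add, zero_add,
      add_left_inj, cond1, cond2, cond3, cond4, cond5, cond6, cond7, cond8, cond9, cond10,
      cond11, if_false, Finset.sum_add_distrib, Finset.sum_const_zero, pinL, pinR]
    split_ifs <;> first
      | (exfalso; omega)
      | (subst_vars; push_cast; (try ring_nf); (try (simp only [Complex.I_sq])); (try push_cast); (try ring_nf); done)
      | (rcases eq_or_ne n (a + 1) with rfl | hn <;> first
          | (exfalso; omega)
          | (subst_vars; push_cast; (try ring_nf); (try (simp only [Complex.I_sq])); (try push_cast); (try ring_nf); done))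
  | a + 1, ha, b + 2, hb =>
    simp only [ite_mul, mul_ite, mul_zero, zero_mul, mul_one, add_mul, mul_add, zero_add,
      add_left_inj, cond1, cond2, cond3, cond4, cond5, cond6, cond7, cond8, cond9, cond10,
      cond11, if_false, Finset.sum_add_distrib, Finset.sum_const_zero, pinL, pinR]
    split_ifs <;> first
      | (exfalso; omega)
      | (subst_vars; push_cast; (try ring_nf); (try (simp only [Complex.I_sq])); (try push_cast); (try ring_nf); done)
      | (rcases eq_or_ne n (a + 1) with rfl | hn <;> first
          | (exfalso; omega)
          | (subst_vars; push_cast; (try ring_nf); (try (simp only [Complex.I_sq])); (try push_cast); (try ring_nf); done))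
end

section
/- With the Clifford homomorphisms as defined via the explicit basis formulas, for all X, Y in R³ the relation ρ_m⁰(X)ρ_m⁰(Y) + ρ_{m-2}⁺(X)ρ_m⁻(Y) = (m/2)·ρ_m⁰([X,Y]) - m²⟨X,Y⟩·Id holds as linear maps on V_m, where ⟨·,·⟩ is the standard inner product on R³. -/
open Complex Matrix Finset

noncomputable def sh (M N : ℕ) (d : ℤ) (f : ℤ → ℂ) : Matrix (Fin M) (Fin N) ℂ :=
  fun j k => if (j.val : ℤ) = (k.val : ℤ) + d then f (k.val : ℤ) else 0

lemma sh_mul {M P N : ℕ} {d e : ℤ} (c : ℤ) (hc : c = d + e) (f g : ℤ → ℂ)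
    (hg : ∀ k : Fin N, ((k.val : ℤ) + e < 0 ∨ (P : ℤ) ≤ (k.val : ℤ) + e) → g (k.val : ℤ) = 0) :
    sh M P d f * sh P N e g = sh M N c (fun k => f (k + e) * g k) := by
  subst hc
  ext j k
  rw [Matrix.mul_apply]
  by_cases hk : 0 ≤ (k.val : ℤ) + e ∧ (k.val : ℤ) + e < P
  · have hlt : ((k.val : ℤ) + e).toNat < P := by omega
    rw [Finset.sum_eq_single (⟨((k.val : ℤ) + e).toNat, hlt⟩ : Fin P)]
    · have h1 : (((⟨((k.val : ℤ) + e).toNat, hlt⟩ : Fin P) : ℕ) : ℤ) = (k.val : ℤ) + e := by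
        simp; omega
      simp only [sh, h1]
      rw [if_pos trivial]
      split_ifs with h2 h3 h3
      · ring
      · exfalso; omega
      · exfalso; omega
      · ring
    · intro l _ hl
      have hne : ((l : ℕ) : ℤ) ≠ (k.val : ℤ) + e := by
        intro hh
        apply hl
        apply Fin.ext
        simp
        omega
      simp [sh, hne]
    · intro h; exact absurd (Finset.mem_univ _) h
  · have h0 : g (k.val : ℤ) = 0 := hg k (by omega)
    simp [sh, h0]

lemma rho0_eq (n : ℕ) (X : ℝ × ℝ × ℝ) :
    rho0 (n + 2) X
      = sh (n+3) (n+3) (-1) (fun k => (-(X.2.1 : ℂ) + Complex.I * (X.2.2 : ℂ)) * k)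
        + sh (n+3) (n+3) 0 (fun k => (X.1 : ℂ) * Complex.I * (2 * k - ((n : ℂ) + 2)))
        + sh (n+3) (n+3) 1 (fun k => ((X.2.1 : ℂ) + Complex.I * (X.2.2 : ℂ)) * (((n : ℂ) + 2) - k)) := by
  ext j k
  simp only [rho0, sh, Matrix.add_apply]
  split_ifs <;> first | (exfalso; omega) | (push_cast; ring1)

lemma rhoPlus_eq (n : ℕ) (X : ℝ × ℝ × ℝ) :
    rhoPlus n X
      = sh (n+3) (n+1) 0 (fun _ => -(X.2.1 : ℂ) + Complex.I * (X.2.2 : ℂ))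
        + sh (n+3) (n+1) 1 (fun _ => 2 * Complex.I * (X.1 : ℂ))
        + sh (n+3) (n+1) 2 (fun _ => -(X.2.1 : ℂ) - Complex.I * (X.2.2 : ℂ)) := by
  ext j k
  simp only [rhoPlus, sh, Matrix.add_apply]
  split_ifs <;> first | (exfalso; omega) | (push_cast; ring1)

lemma rhoMinus_eq (n : ℕ) (Y : ℝ × ℝ × ℝ) :
    rhoMinus n Y
      = sh (n+1) (n+3) (-2) (fun k => ((Y.2.1 : ℂ) - Complex.I * (Y.2.2 : ℂ)) * (k * (k - 1)))
        + sh (n+1) (n+3) (-1) (fun k => 2 * Complex.I * (Y.1 : ℂ) * (k * (((n : ℂ) + 2) - k)))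
        + sh (n+1) (n+3) 0 (fun k => ((Y.2.1 : ℂ) + Complex.I * (Y.2.2 : ℂ))
            * ((((n : ℂ) + 2) - k) * (((n : ℂ) + 1) - k))) := by
  ext j k
  simp only [rhoMinus, sh, Matrix.add_apply]
  split_ifs <;> first | (exfalso; omega) | (push_cast; ring1)

lemma one_eq_sh (N : ℕ) : (1 : Matrix (Fin N) (Fin N) ℂ) = sh N N 0 (fun _ => 1) := by
  ext j k
  simp only [Matrix.one_apply, sh]
  by_cases h : j = k
  · subst h; simp
  · rw [if_neg h, if_neg (by intro hh; exact h (Fin.ext (by omega)))]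

lemma smul_sh (M N : ℕ) (c : ℂ) (d : ℤ) (f : ℤ → ℂ) :
    c • sh M N d f = sh M N d (fun k => c * f k) := by
  ext j k
  simp only [Matrix.smul_apply, sh, smul_eq_mul]
  split_ifs <;> ring

/-- for `m ≥ 2` (written `m = n + 2`), on `V_m`:
`ρ_m⁰(X)ρ_m⁰(Y) + ρ_{m-2}⁺(X)ρ_m⁻(Y) = (m/2)·ρ_m⁰([X,Y]) - m²⟨X,Y⟩·Id`. -/
theorem clifford_relation_zero_minus (n : ℕ) (X Y : ℝ × ℝ × ℝ) :
    rho0 (n + 2) X * rho0 (n + 2) Y + rhoPlus n X * rhoMinus n Y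
      = (((n : ℂ) + 2) / 2) • rho0 (n + 2) (bracket3 X Y)
        - ((((n : ℂ) + 2) ^ 2) * (inner3 X Y : ℂ)) • (1 : Matrix (Fin (n + 3)) (Fin (n + 3)) ℂ) := by
  have hY1 : ∀ k : Fin (n+3), ((k.val : ℤ) + (-1) < 0 ∨ ((n+3 : ℕ) : ℤ) ≤ (k.val : ℤ) + (-1)) →
      (-(Y.2.1 : ℂ) + Complex.I * (Y.2.2 : ℂ)) * (((k.val : ℤ) : ℂ)) = 0 := by
    intro k hk
    have := k.isLt
    have h0 : (k.val : ℤ) = 0 := by omega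
    simp [h0]
  have hY2 : ∀ k : Fin (n+3), ((k.val : ℤ) + 0 < 0 ∨ ((n+3 : ℕ) : ℤ) ≤ (k.val : ℤ) + 0) →
      (Y.1 : ℂ) * Complex.I * (2 * ((k.val : ℤ) : ℂ) - ((n : ℂ) + 2)) = 0 := by
    intro k hk
    exact absurd hk (by have := k.isLt; omega)
  have hY3 : ∀ k : Fin (n+3), ((k.val : ℤ) + 1 < 0 ∨ ((n+3 : ℕ) : ℤ) ≤ (k.val : ℤ) + 1) →
      ((Y.2.1 : ℂ) + Complex.I * (Y.2.2 : ℂ)) * (((n : ℂ) + 2) - ((k.val : ℤ) : ℂ)) = 0 := by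
    intro k hk
    have := k.isLt
    have h0 : (k.val : ℤ) = (n : ℤ) + 2 := by omega
    rw [h0]
    push_cast
    ring
  have hM1 : ∀ k : Fin (n+3), ((k.val : ℤ) + (-2) < 0 ∨ ((n+1 : ℕ) : ℤ) ≤ (k.val : ℤ) + (-2)) →
      ((Y.2.1 : ℂ) - Complex.I * (Y.2.2 : ℂ)) * (((k.val : ℤ) : ℂ) * (((k.val : ℤ) : ℂ) - 1)) = 0 := by
    intro k hk
    have := k.isLt
    have h0 : (k.val : ℤ) = 0 ∨ (k.val : ℤ) = 1 := by omega
    rcases h0 with h0 | h0 <;> rw [h0] <;> push_cast <;> ring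
  have hM2 : ∀ k : Fin (n+3), ((k.val : ℤ) + (-1) < 0 ∨ ((n+1 : ℕ) : ℤ) ≤ (k.val : ℤ) + (-1)) →
      2 * Complex.I * (Y.1 : ℂ) * (((k.val : ℤ) : ℂ) * (((n : ℂ) + 2) - ((k.val : ℤ) : ℂ))) = 0 := by
    intro k hk
    have := k.isLt
    have h0 : (k.val : ℤ) = 0 ∨ (k.val : ℤ) = (n : ℤ) + 2 := by omega
    rcases h0 with h0 | h0 <;> rw [h0] <;> push_cast <;> ring
  have hM3 : ∀ k : Fin (n+3), ((k.val : ℤ) + 0 < 0 ∨ ((n+1 : ℕ) : ℤ) ≤ (k.val : ℤ) + 0) →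
      ((Y.2.1 : ℂ) + Complex.I * (Y.2.2 : ℂ))
        * ((((n : ℂ) + 2) - ((k.val : ℤ) : ℂ)) * (((n : ℂ) + 1) - ((k.val : ℤ) : ℂ))) = 0 := by
    intro k hk
    have := k.isLt
    have h0 : (k.val : ℤ) = (n : ℤ) + 1 ∨ (k.val : ℤ) = (n : ℤ) + 2 := by omega
    rcases h0 with h0 | h0 <;> rw [h0] <;> push_cast <;> ring
  rw [rho0_eq n X, rho0_eq n Y, rhoPlus_eq n X, rhoMinus_eq n Y,
    rho0_eq n (bracket3 X Y), one_eq_sh (n+3)]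
  simp only [Matrix.add_mul, Matrix.mul_add, smul_add, smul_sh]
  rw [sh_mul (d := -1) (-2) (by norm_num) _ _ hY1,
      sh_mul (d := -1) (-1) (by norm_num) _ _ hY2,
      sh_mul (d := -1) (0) (by norm_num) _ _ hY3,
      sh_mul (d := 0) (-1) (by norm_num) _ _ hY1,
      sh_mul (d := 0) (0) (by norm_num) _ _ hY2,
      sh_mul (d := 0) (1) (by norm_num) _ _ hY3,
      sh_mul (d := 1) (0) (by norm_num) _ _ hY1,
      sh_mul (d := 1) (1) (by norm_num) _ _ hY2,
      sh_mul (d := 1) (2) (by norm_num) _ _ hY3,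
      sh_mul (d := 0) (-2) (by norm_num) _ _ hM1,
      sh_mul (d := 0) (-1) (by norm_num) _ _ hM2,
      sh_mul (d := 0) (0) (by norm_num) _ _ hM3,
      sh_mul (d := 1) (-1) (by norm_num) _ _ hM1,
      sh_mul (d := 1) (0) (by norm_num) _ _ hM2,
      sh_mul (d := 1) (1) (by norm_num) _ _ hM3,
      sh_mul (d := 2) (0) (by norm_num) _ _ hM1,
      sh_mul (d := 2) (1) (by norm_num) _ _ hM2,
      sh_mul (d := 2) (2) (by norm_num) _ _ hM3]
  ext j k
  simp only [Matrix.add_apply, Matrix.sub_apply, sh, Matrix.smul_apply, smul_eq_mul,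
    bracket3, inner3]
  split_ifs <;>
    first
      | (exfalso; omega)
      | (push_cast; try ring_nf; try simp only [Complex.I_sq]; try ring1)
end

section
/- The determinant of ρ_m⁰(ξ) for ξ = ξ₁e₁ + ξ₂e₂ + ξ₃e₃ ∈ R³ equals (ξ₁² + ξ₂² + ξ₃²)^{(m+1)/2} · ∏_{k=0}^{m} i(2k-m). In particular, if m is odd, then ρ_m⁰(ξ) is invertible for every nonzero ξ ∈ R³. -/
open Complex Matrix Finset

/-! In the monomial basis, `ρ_m⁰(ξ)` is the operator `p ↦ D p' - (m/2) D' p` on polynomials of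
degree `≤ m`, where `D = a + b z + c z²` has discriminant `b² - 4ac = -4|ξ|²`. Translating
`z ↦ z + r` to a root `r` of `D` conjugates it to the same operator for
`D(z + r) = (b + 2cr) z + c z²`, which is lower triangular with diagonal entries
`(b + 2cr)(k - m/2)`. Since `(b + 2cr)² = b² - 4ac`, the determinant is
`∏ₖ 2i|ξ| (k - m/2)` (the sign of the square root does not matter, the weights `k - m/2`
being symmetric about `0`). -/

open Polynomial

namespace Polynomial

section CommRing

variable {R : Type*} [CommRing R]

theorem taylor_derivative (r : R) (p : R[X]) :
    taylor r (derivative p) = derivative (taylor r p) := by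
  simp [taylor_apply, derivative_comp]

/-- The Lie derivative along the vector field `D ∂_z` of densities of weight `-w`; for quadratic
`D` and `w = m/2` this is the action of `sl₂` on polynomials of degree `≤ m`. -/
noncomputable def densityAction (w : R) (D : R[X]) : R[X] →ₗ[R] R[X] :=
  LinearMap.mulLeft R D ∘ₗ derivative - LinearMap.mulLeft R (C w * derivative D)

theorem densityAction_apply (w : R) (D p : R[X]) :
    densityAction w D p = D * derivative p - C w * derivative D * p := rfl

theorem taylor_densityAction (w r : R) (D p : R[X]) :
    taylor r (densityAction w D p) = densityAction w (taylor r D) (taylor r p) := by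
  simp only [densityAction_apply, taylor_mul, map_sub, taylor_C, taylor_derivative]

theorem taylor_quadratic (a b c r : R) :
    taylor r (C a + C b * X + C c * X ^ 2)
      = C (a + b * r + c * r ^ 2) + C (b + 2 * c * r) * X + C c * X ^ 2 := by
  simp only [map_add, taylor_mul, taylor_C, taylor_X, taylor_pow, map_mul, map_pow, C_ofNat]
  ring

theorem densityAction_quadratic_X_pow (w a b c : R) (k : ℕ) :
    densityAction w (C a + C b * X + C c * X ^ 2) (X ^ k)
      = C (a * k) * X ^ (k - 1) + C (b * (k - w)) * X ^ k
        + C (c * (k - 2 * w)) * X ^ (k + 1) := by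
  simp only [densityAction_apply, derivative_add, derivative_C, derivative_C_mul_X,
    derivative_C_mul_X_sq, derivative_X_pow, map_mul, map_sub, map_natCast, map_ofNat]
  rcases k with _ | k
  · simp only [Nat.cast_zero, pow_zero]
    ring
  · simp only [Nat.add_sub_cancel]
    push_cast
    ring

theorem C_mul_X_pow_mem_degreeLT {n N : ℕ} (x : R) (h : n < N) : C x * X ^ n ∈ R[X]_N :=
  mem_degreeLT.2 ((degree_C_mul_X_pow_le n x).trans_lt (by exact_mod_cast h))

theorem densityAction_mem_degreeLT {m : ℕ} {w : R} (hw : 2 * w = m) (a b c : R) {p : R[X]}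
    (hp : p ∈ R[X]_(m + 1)) :
    densityAction w (C a + C b * X + C c * X ^ 2) p ∈ R[X]_(m + 1) := by
  classical
  rw [degreeLT_eq_span_X_pow] at hp
  refine Submodule.span_induction (p := fun p _ => densityAction w _ p ∈ R[X]_(m + 1))
    ?_ ?_ ?_ ?_ hp
  · simp only [Finset.coe_image, Finset.coe_range, Set.mem_image, Set.mem_Iio,
      forall_exists_index, and_imp]
    rintro _ k hk rfl
    rw [densityAction_quadratic_X_pow]
    refine add_mem (add_mem (C_mul_X_pow_mem_degreeLT _ (by omega))
      (C_mul_X_pow_mem_degreeLT _ hk)) ?_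
    rcases Nat.lt_or_ge k m with hkm | hkm
    · exact C_mul_X_pow_mem_degreeLT _ (by omega)
    · rw [show k = m by omega, hw, sub_self, mul_zero, C_0, zero_mul]
      exact zero_mem _
  · simp
  · intro p q _ _ hp hq
    simpa using add_mem hp hq
  · intro r p _ hp
    simpa using Submodule.smul_mem _ r hp

noncomputable def densityOp (m : ℕ) {w : R} (hw : 2 * w = m) (a b c : R) :
    R[X]_(m + 1) →ₗ[R] R[X]_(m + 1) :=
  (densityAction w (C a + C b * X + C c * X ^ 2)).restrict fun _ =>
    densityAction_mem_degreeLT hw a b c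

def densityMatrix (m : ℕ) (w a b c : R) : Matrix (Fin (m + 1)) (Fin (m + 1)) R :=
  Matrix.of fun j k =>
    (if (j : ℕ) + 1 = k then a * k else 0) + (if j = k then b * (k - w) else 0)
      + (if (j : ℕ) = k + 1 then c * (k - m) else 0)

theorem toMatrix_densityOp (m : ℕ) {w : R} (hw : 2 * w = m) (a b c : R) :
    LinearMap.toMatrix (degreeLT.basis R (m + 1)) (degreeLT.basis R (m + 1))
      (densityOp m hw a b c) = densityMatrix m w a b c := by
  ext j k
  rw [LinearMap.toMatrix_apply, degreeLT.basis_repr, densityOp, LinearMap.coe_restrict_apply,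
    degreeLT.basis_val, densityAction_quadratic_X_pow, hw]
  simp only [coeff_add, coeff_C_mul_X_pow, densityMatrix, Matrix.of_apply, Fin.val_inj]
  rcases k with ⟨_ | k, hk⟩
  · simp
  · simp only [add_tsub_cancel_right, Nat.cast_add, Nat.cast_one, Nat.add_right_cancel_iff]

theorem taylor_conj_densityOp (m : ℕ) {w : R} (hw : 2 * w = m) (a b c r : R) :
    (taylorLinearEquiv r (m + 1)).toLinearMap ∘ₗ densityOp m hw a b c
        ∘ₗ (taylorLinearEquiv r (m + 1)).symm.toLinearMap
      = densityOp m hw (a + b * r + c * r ^ 2) (b + 2 * c * r) c := by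
  refine LinearMap.ext fun p => Subtype.ext ?_
  change taylor r (densityAction w _ (taylor (-r) (p : R[X]))) = _
  rw [taylor_densityAction, taylor_quadratic, taylor_taylor, add_neg_cancel, taylor_zero]
  rfl

theorem det_densityMatrix_of_root (m : ℕ) {w : R} (hw : 2 * w = m) {a b c r : R}
    (hr : a + b * r + c * r ^ 2 = 0) :
    (densityMatrix m w a b c).det = ∏ k : Fin (m + 1), (b + 2 * c * r) * (k - w) := by
  rw [← toMatrix_densityOp m hw, LinearMap.det_toMatrix,
    ← LinearMap.det_conj _ (taylorLinearEquiv r (m + 1)), taylor_conj_densityOp, hr,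
    ← LinearMap.det_toMatrix (degreeLT.basis R (m + 1)), toMatrix_densityOp,
    Matrix.det_of_isLowerTriangular _ fun j k (hjk : j < k) => ?_]
  · simp [densityMatrix]
  · have : (j : ℕ) ≠ k + 1 := by omega
    simp [densityMatrix, hjk.ne, this]

end CommRing

end Polynomial

theorem prod_mul_sub_eq_of_sq_eq {R : Type*} [CommRing R] [NoZeroDivisors R] {m : ℕ}
    {w u v : R} (hw : 2 * w = m) (huv : u ^ 2 = v ^ 2) :
    ∏ k ∈ range (m + 1), u * (k - w) = ∏ k ∈ range (m + 1), v * (k - w) := by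
  obtain rfl | rfl := sq_eq_sq_iff_eq_or_eq_neg.1 huv
  · rfl
  rw [← prod_range_reflect (fun k => v * ((k : R) - w))]
  refine prod_congr rfl fun k hk => ?_
  rw [Nat.add_sub_cancel, Nat.cast_sub (Nat.lt_succ_iff.1 (mem_range.1 hk))]
  linear_combination v * hw

theorem rho0_eq_densityMatrix (m : ℕ) (ξ : ℝ × ℝ × ℝ) :
    rho0 m ξ = densityMatrix m ((m : ℂ) / 2) (-ξ.2.1 + I * ξ.2.2) (2 * I * ξ.1)
      (-(ξ.2.1 + I * ξ.2.2)) := by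
  ext j k
  simp only [rho0, densityMatrix, Matrix.of_apply, Fin.val_inj]
  split_ifs <;> ring

theorem rpow_succ_div_two_eq_sqrt_pow {x : ℝ} (hx : 0 ≤ x) (m : ℕ) :
    x ^ (((m : ℝ) + 1) / 2) = √x ^ (m + 1) := by
  rw [Real.sqrt_eq_rpow, ← Real.rpow_natCast, ← Real.rpow_mul hx]
  push_cast
  ring_nf

theorem sq_add_sq_add_sq_pos {ξ : ℝ × ℝ × ℝ} (hξ : ξ ≠ 0) :
    0 < ξ.1 ^ 2 + ξ.2.1 ^ 2 + ξ.2.2 ^ 2 := by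
  obtain ⟨x, y, z⟩ := ξ
  simp only [ne_eq, Prod.mk_eq_zero, not_and_or] at hξ
  rcases hξ with h | h | h <;> positivity

theorem det_rho0_eq_prod (m : ℕ) (ξ : ℝ × ℝ × ℝ) :
    (rho0 m ξ).det = ∏ k ∈ range (m + 1),
      2 * I * √(ξ.1 ^ 2 + ξ.2.1 ^ 2 + ξ.2.2 ^ 2) * (k - (m : ℂ) / 2) := by
  set a : ℂ := -ξ.2.1 + I * ξ.2.2
  set b : ℂ := 2 * I * ξ.1
  set c : ℂ := -(ξ.2.1 + I * ξ.2.2)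
  set s : ℂ := 2 * I * √(ξ.1 ^ 2 + ξ.2.1 ^ 2 + ξ.2.2 ^ 2)
  have hdiscrim : discrim c b a = s * s := by
    have hsqrt : (√(ξ.1 ^ 2 + ξ.2.1 ^ 2 + ξ.2.2 ^ 2) : ℂ) ^ 2
        = ξ.1 ^ 2 + ξ.2.1 ^ 2 + ξ.2.2 ^ 2 := by
      rw [← Complex.ofReal_pow, Real.sq_sqrt (by positivity)]
      push_cast
      rfl
    rw [discrim]
    linear_combination (-4 * I ^ 2) * hsqrt + (-4 * (ξ.2.1 : ℂ) ^ 2) * I_sq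
  obtain ⟨r, hr⟩ : ∃ r, c * (r * r) + b * r + a = 0 := by
    by_cases hc : c = 0
    · -- `a = c̄`, so `D` vanishes identically when `c = 0`.
      have hac : a = starRingEnd ℂ c := by simp [a, c, Complex.ext_iff]
      exact ⟨0, by simp [hac, hc]⟩
    · exact exists_quadratic_eq_zero hc ⟨s, hdiscrim⟩
  have hw : 2 * ((m : ℂ) / 2) = m := by ring
  rw [rho0_eq_densityMatrix, det_densityMatrix_of_root m hw (r := r) (by linear_combination hr),
    Fin.prod_univ_eq_prod_range (fun k => (b + 2 * c * r) * (k - (m : ℂ) / 2))]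
  refine prod_mul_sub_eq_of_sq_eq hw ?_
  rw [sq s, ← hdiscrim, discrim_eq_sq_of_quadratic_eq_zero hr]
  ring

/-- `det ρ_m⁰(ξ) = (ξ₁² + ξ₂² + ξ₃²)^{(m+1)/2} · ∏_{k=0}^m i(2k-m)`; in particular
for odd `m`, `ρ_m⁰(ξ)` is invertible for every `ξ ≠ 0` (ellipticity of `D_m⁰`). -/
theorem det_rho0 (m : ℕ) (ξ : ℝ × ℝ × ℝ) :
    (rho0 m ξ).det
      = ((((ξ.1 ^ 2 + ξ.2.1 ^ 2 + ξ.2.2 ^ 2) ^ (((m : ℝ) + 1) / 2) : ℝ)) : ℂ)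
          * ∏ k ∈ Finset.range (m + 1), (Complex.I * (2 * (k : ℂ) - (m : ℂ)))
    ∧ (Odd m → ξ ≠ 0 → IsUnit (rho0 m ξ)) := by
  refine ⟨?_, fun hm hξ => ?_⟩
  · rw [det_rho0_eq_prod, rpow_succ_div_two_eq_sqrt_pow (by positivity), Complex.ofReal_pow]
    calc _ = ∏ k ∈ range (m + 1),
            (√(ξ.1 ^ 2 + ξ.2.1 ^ 2 + ξ.2.2 ^ 2) : ℂ) * (I * (2 * k - m)) :=
          prod_congr rfl fun k _ => by ring
      _ = _ := by rw [prod_mul_distrib, prod_const, card_range]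
  · rw [Matrix.isUnit_iff_isUnit_det, isUnit_iff_ne_zero, det_rho0_eq_prod, prod_ne_zero_iff]
    intro k _
    have hsqrt : (√(ξ.1 ^ 2 + ξ.2.1 ^ 2 + ξ.2.2 ^ 2) : ℂ) ≠ 0 :=
      Complex.ofReal_ne_zero.2 (Real.sqrt_pos.2 (sq_add_sq_add_sq_pos hξ)).ne'
    refine mul_ne_zero (mul_ne_zero (mul_ne_zero two_ne_zero I_ne_zero) hsqrt) ?_
    rw [sub_ne_zero, ne_eq, eq_div_iff two_ne_zero]
    norm_cast
    rintro rfl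
    exact Nat.not_even_iff_odd.2 hm (even_two.mul_left k)
end

section
/- Let M be a compact 3-dimensional spin manifold, m ≥ 1, and suppose there is a constant r such that ⟨R_m⁰φ, φ⟩_{L²} ≥ r‖φ‖² for all sections φ of the spin-m/2 bundle S_m. Given the two Bochner identities (D_m⁰)² + D_{m-2}⁺D_m⁻ = m²∇*∇ + (m/2)R_m⁰ and (D_m⁰)² + D_{m+2}⁻D_m⁺ = (m+2)²∇*∇ - ((m+2)/2)R_m⁰, and writing Δ_m = (D_m⁰)² + D_{m-2}⁺D_m⁻, every eigenvalue λ of Δ_m satisfies λ ≥ (m(m+1)/(m+2))·r. -/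
open scoped InnerProductSpace ComplexConjugate


/-- abstract Bochner estimate. If the nonnegative symmetric operators `Δ`, `Δ'`
and the symmetric operator `R` on the Hilbert space of sections satisfy
`(m+2)²Δ - m²Δ' = m(m+1)(m+2)R` (obtained by eliminating `∇*∇` from the Bochner identities)
and `⟨Rφ,φ⟩ ≥ r‖φ‖²`, then every eigenvalue `λ` of `Δ` satisfies `λ ≥ (m(m+1)/(m+2))·r`. -/
theorem eigenvalue_lower_bound_Delta {H : Type*} [NormedAddCommGroup H]
    [InnerProductSpace ℂ H] (m : ℕ) (hm : 1 ≤ m) (Δ Δ' R : H →ₗ[ℂ] H)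
    (hΔsym : ∀ φ ψ : H, ⟪Δ φ, ψ⟫_ℂ = ⟪φ, Δ ψ⟫_ℂ)
    (hΔ'sym : ∀ φ ψ : H, ⟪Δ' φ, ψ⟫_ℂ = ⟪φ, Δ' ψ⟫_ℂ)
    (hRsym : ∀ φ ψ : H, ⟪R φ, ψ⟫_ℂ = ⟪φ, R ψ⟫_ℂ)
    (hΔnn : ∀ φ : H, 0 ≤ (⟪Δ φ, φ⟫_ℂ).re)
    (hΔ'nn : ∀ φ : H, 0 ≤ (⟪Δ' φ, φ⟫_ℂ).re)
    (r : ℝ) (hR : ∀ φ : H, r * ‖φ‖ ^ 2 ≤ (⟪R φ, φ⟫_ℂ).re)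
    (hid : (((m : ℂ) + 2) ^ 2) • Δ - ((m : ℂ) ^ 2) • Δ'
      = ((m : ℂ) * ((m : ℂ) + 1) * ((m : ℂ) + 2)) • R)
    (lam : ℝ) (φ : H) (hφ : φ ≠ 0) (heig : Δ φ = (lam : ℂ) • φ) :
    ((m : ℝ) * ((m : ℝ) + 1) / ((m : ℝ) + 2)) * r ≤ lam := by
  set M : ℝ := (m : ℝ) with hMdef
  have hM : (1:ℝ) ≤ M := by rw [hMdef]; exact_mod_cast hm
  have hnorm : (0:ℝ) < ‖φ‖ := norm_pos_iff.mpr hφ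
  have hn : (0:ℝ) < ‖φ‖ ^ 2 := by positivity
  -- rewrite complex coefficients as real casts
  have c1 : ((m : ℂ) + 2) ^ 2 = ((((M + 2) ^ 2 : ℝ)) : ℂ) := by simp only [hMdef]; push_cast; ring
  have c2 : (m : ℂ) ^ 2 = (((M ^ 2 : ℝ)) : ℂ) := by simp only [hMdef]; push_cast; ring
  have c3 : (m : ℂ) * ((m : ℂ) + 1) * ((m : ℂ) + 2)
      = (((M * (M + 1) * (M + 2) : ℝ)) : ℂ) := by simp only [hMdef]; push_cast; ring
  rw [c1, c2, c3] at hid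
  have key := congrArg (fun T : H →ₗ[ℂ] H => ⟪T φ, φ⟫_ℂ) hid
  simp only [LinearMap.sub_apply, LinearMap.smul_apply, inner_sub_left,
    inner_smul_left, Complex.conj_ofReal] at key
  have hΔφ : ⟪Δ φ, φ⟫_ℂ = (((lam * ‖φ‖ ^ 2 : ℝ)) : ℂ) := by
    rw [heig, inner_smul_left, inner_self_eq_norm_sq_to_K]
    push_cast
    simp [mul_comm]
  rw [hΔφ] at key
  have keyre := congrArg Complex.re key
  simp only [Complex.sub_re, Complex.mul_re, Complex.ofReal_re, Complex.ofReal_im,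
    zero_mul, sub_zero, mul_zero] at keyre
  -- keyre : (M+2)^2 * (lam * ‖φ‖^2) - M^2 * ⟪Δ'φ,φ⟫.re = M(M+1)(M+2) * ⟪Rφ,φ⟫.re
  have hRb := hR φ
  have hΔ'b := hΔ'nn φ
  have hineq : (M * (M + 1) * (M + 2)) * (r * ‖φ‖ ^ 2)
      ≤ (M + 2) ^ 2 * (lam * ‖φ‖ ^ 2) := by
    nlinarith [mul_le_mul_of_nonneg_left hRb
      (by nlinarith : (0:ℝ) ≤ M * (M + 1) * (M + 2)),
      mul_nonneg (sq_nonneg M) hΔ'b]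
  have h2pos : (0:ℝ) < M + 2 := by linarith
  rw [div_mul_eq_mul_div, div_le_iff₀ h2pos]
  nlinarith [hineq, mul_pos h2pos hn]
end

section
/- Let M be a 3-dimensional spin manifold with local orthonormal frame e_1, e_2, e_3, and let ρ_m⁰ denote the representation on V_m (the fibre of S_m). If ⟨R(eᵢ,eⱼ)e_k, e_l⟩ = c(δ_{jk}δ_{il} - δ_{ik}δ_{jl}), i.e. M has constant curvature c, then the endomorphism R_m⁰ = ∑_{σ∈S₃} sgn(σ) ρ_m⁰(e_{σ(1)}) R_m(e_{σ(2)}, e_{σ(3)}), where R_m(X,Y) = (1/4)∑_{τ∈S₃} sgn(τ)⟨R(X,Y)e_{τ(1)}, e_{τ(2)}⟩ρ_m⁰(e_{τ(3)}), satisfies R_m⁰ = -c∑ᵢ ρ_m⁰(eᵢ)² = m(m+2)c·Id on V_m. -/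
open Complex Matrix Finset

/-- The standard basis of `ℝ³`. -/
def stdBasis3 : Fin 3 → ℝ × ℝ × ℝ
  | 0 => (1, 0, 0)
  | 1 => (0, 1, 0)
  | 2 => (0, 0, 1)

/-- Constant-curvature components: `⟨R(eᵢ,eⱼ)e_k, e_l⟩ = c(δ_{jk}δ_{il} - δ_{ik}δ_{jl})`. -/
def constCurv (c : ℝ) (i j k l : Fin 3) : ℝ :=
  c * ((if j = k then 1 else 0) * (if i = l then 1 else 0)
    - (if i = k then 1 else 0) * (if j = l then 1 else 0))

/-- `R_m(eᵢ,eⱼ) = (1/4)∑_{τ∈S₃} sgn(τ)⟨R(eᵢ,eⱼ)e_{τ(1)}, e_{τ(2)}⟩ρ_m⁰(e_{τ(3)})`. -/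
noncomputable def RmXY (m : ℕ) (c : ℝ) (i j : Fin 3) :
    Matrix (Fin (m + 1)) (Fin (m + 1)) ℂ :=
  (1 / 4 : ℂ) • ∑ τ : Equiv.Perm (Fin 3),
    (((Equiv.Perm.sign τ : ℤ) : ℂ) * (constCurv c i j (τ 0) (τ 1) : ℝ))
      • rho0 m (stdBasis3 (τ 2))


section Aux

open Equiv

-- ### band matrices

noncomputable def dgM (n : ℕ) (f : ℕ → ℂ) : Matrix (Fin n) (Fin n) ℂ :=
  Matrix.of fun j k => if (j:ℕ) = (k:ℕ) then f (k:ℕ) else 0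
noncomputable def upM (n : ℕ) (f : ℕ → ℂ) : Matrix (Fin n) (Fin n) ℂ :=
  Matrix.of fun j k => if (j:ℕ) + 1 = (k:ℕ) then f (k:ℕ) else 0
noncomputable def dnM (n : ℕ) (f : ℕ → ℂ) : Matrix (Fin n) (Fin n) ℂ :=
  Matrix.of fun j k => if (j:ℕ) = (k:ℕ) + 1 then f (k:ℕ) else 0
noncomputable def up2M (n : ℕ) (f : ℕ → ℂ) : Matrix (Fin n) (Fin n) ℂ :=
  Matrix.of fun j k => if (j:ℕ) + 2 = (k:ℕ) then f (k:ℕ) else 0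
noncomputable def dn2M (n : ℕ) (f : ℕ → ℂ) : Matrix (Fin n) (Fin n) ℂ :=
  Matrix.of fun j k => if (j:ℕ) = (k:ℕ) + 2 then f (k:ℕ) else 0

theorem mySumCollapse {n : ℕ} (t : ℕ) (F : Fin n → ℂ) (h : ∀ l : Fin n, (l:ℕ) ≠ t → F l = 0) :
    ∑ l, F l = if ht : t < n then F ⟨t, ht⟩ else 0 := by
  split_ifs with ht
  · exact Finset.sum_eq_single ⟨t, ht⟩ (fun l _ hl => h l (by simpa [Fin.ext_iff] using hl))
      (fun h => absurd (Finset.mem_univ _) h)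
  · exact Finset.sum_eq_zero fun l _ => h l fun he => ht (he ▸ l.isLt)

theorem dg_mul_dg (n : ℕ) (f g : ℕ → ℂ) : dgM n f * dgM n g = dgM n fun k => f k * g k := by
  ext j k
  rw [Matrix.mul_apply, mySumCollapse (j:ℕ) _ (fun l hl => by
    simp only [dgM, Matrix.of_apply]
    rw [if_neg (show ¬((j:ℕ) = (l:ℕ)) by omega), zero_mul])]
  rw [dif_pos j.isLt]
  simp only [dgM, Matrix.of_apply, Fin.val_mk]
  split_ifs <;> first
    | rfl | omega
    | (rw [show (j:ℕ) = (k:ℕ) by omega])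
    | simp | simp_all

theorem up_mul_up (n : ℕ) (f g : ℕ → ℂ) :
    upM n f * upM n g = up2M n fun k => f (k-1) * g k := by
  ext j k
  rw [Matrix.mul_apply, mySumCollapse ((j:ℕ)+1) _ (fun l hl => by
    simp only [upM, Matrix.of_apply]
    rw [if_neg (show ¬((j:ℕ) + 1 = (l:ℕ)) by omega), zero_mul])]
  simp only [upM, up2M, Matrix.of_apply, Fin.val_mk]
  split_ifs <;> first
    | rfl | omega
    | (rw [show (j:ℕ)+1 = (k:ℕ)-1 by omega])
    | simp | simp_all

theorem dn_mul_dn (n : ℕ) (f g : ℕ → ℂ) :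
    dnM n f * dnM n g = dn2M n fun k => f (k+1) * g k := by
  ext j k
  rw [Matrix.mul_apply, mySumCollapse ((k:ℕ)+1) _ (fun l hl => by
    simp only [dnM, Matrix.of_apply]
    rw [if_neg (show ¬((l:ℕ) = (k:ℕ) + 1) by omega), mul_zero])]
  simp only [dnM, dn2M, Matrix.of_apply, Fin.val_mk]
  split_ifs <;> first | rfl | omega | simp | simp_all

theorem up_mul_dn (n : ℕ) (f g : ℕ → ℂ) (hb : f n * g (n-1) = 0) :
    upM n f * dnM n g = dgM n fun k => f (k+1) * g k := by
  ext j k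
  rw [Matrix.mul_apply, mySumCollapse ((j:ℕ)+1) _ (fun l hl => by
    simp only [upM, dnM, Matrix.of_apply]
    rw [if_neg (show ¬((j:ℕ) + 1 = (l:ℕ)) by omega), zero_mul])]
  simp only [upM, dnM, dgM, Matrix.of_apply, Fin.val_mk]
  split_ifs <;> first
    | rfl | omega
    | (rw [show (j:ℕ)+1 = (k:ℕ)+1 by omega])
    | (rw [show (k:ℕ)+1 = n by omega, show (k:ℕ) = n-1 by omega]; exact hb.symm)
    | simp | simp_all

theorem dn_mul_up (n : ℕ) (f g : ℕ → ℂ) (hb : g 0 * f 0 = 0) :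
    dnM n g * upM n f = dgM n fun k => g (k-1) * f k := by
  ext j k
  rw [Matrix.mul_apply, mySumCollapse ((k:ℕ)-1) _ (fun l hl => by
    simp only [upM, dnM, Matrix.of_apply]
    rw [if_neg (show ¬((l:ℕ) + 1 = (k:ℕ)) by omega), mul_zero])]
  rw [dif_pos (show (k:ℕ)-1 < n by omega)]
  simp only [upM, dnM, dgM, Matrix.of_apply, Fin.val_mk]
  split_ifs <;> first
    | rfl | omega
    | (rw [show (j:ℕ) = (k:ℕ)-1+1 by omega])
    | (rw [show (k:ℕ)-1 = 0 by omega, show (k:ℕ) = 0 by omega]; exact hb.symm)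
    | (rw [show (k:ℕ)-1 = 0 by omega, show (k:ℕ) = 0 by omega, zero_mul]; exact hb.symm)
    | (rw [show (k:ℕ)-1 = 0 by omega, show (k:ℕ) = 0 by omega, mul_zero]; exact hb.symm)
    | simp | simp_all

-- ### decomposition of `rho0` into bands

theorem rho0_e1 (m : ℕ) : rho0 m (1, 0, 0) =
    dgM (m+1) (fun k => Complex.I * (2 * (k:ℂ) - (m:ℂ))) := by
  ext j k
  simp only [rho0, dgM, Matrix.of_apply]
  push_cast
  split_ifs <;> ring

theorem rho0_e2 (m : ℕ) : rho0 m (0, 1, 0) =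
    upM (m+1) (fun k => -(k:ℂ)) + dnM (m+1) (fun k => (m:ℂ) - (k:ℂ)) := by
  ext j k
  simp only [rho0, upM, dnM, Matrix.add_apply, Matrix.of_apply]
  push_cast
  split_ifs <;> ring

theorem rho0_e3 (m : ℕ) : rho0 m (0, 0, 1) =
    upM (m+1) (fun k => Complex.I * (k:ℂ)) + dnM (m+1) (fun k => Complex.I * ((m:ℂ) - (k:ℂ))) := by
  ext j k
  simp only [rho0, upM, dnM, Matrix.add_apply, Matrix.of_apply]
  push_cast
  split_ifs <;> ring

-- ### the Casimir computation

theorem casimir (m : ℕ) :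
    (∑ i : Fin 3, rho0 m (stdBasis3 i) * rho0 m (stdBasis3 i))
      = (-((m:ℂ) * ((m:ℂ) + 2))) • (1 : Matrix (Fin (m+1)) (Fin (m+1)) ℂ) := by
  rw [Fin.sum_univ_three, show stdBasis3 0 = (1,0,0) from rfl,
    show stdBasis3 1 = (0,1,0) from rfl, show stdBasis3 2 = (0,0,1) from rfl,
    rho0_e1, rho0_e2, rho0_e3, dg_mul_dg]
  rw [add_mul, mul_add, mul_add, add_mul, mul_add, mul_add]
  rw [up_mul_up, up_mul_up, dn_mul_dn, dn_mul_dn,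
    up_mul_dn _ _ _ (by simp), up_mul_dn _ _ _ (by simp),
    dn_mul_up _ _ _ (by simp), dn_mul_up _ _ _ (by simp)]
  ext j k
  simp only [Matrix.add_apply, Matrix.smul_apply, Matrix.one_apply, smul_eq_mul,
    dgM, up2M, dn2M, Matrix.of_apply, Fin.ext_iff, mul_ite, mul_one, mul_zero]
  rcases Nat.eq_zero_or_pos (k:ℕ) with hk | hk
  · rw [hk, show (0:ℕ)-1 = 0 from rfl]
    split_ifs <;> first
      | omega
      | (push_cast; ring_nf; try simp only [Complex.I_sq]; try ring_nf; done)
  · rw [Nat.cast_pred hk]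
    split_ifs <;> first
      | omega
      | (push_cast; ring_nf; try simp only [Complex.I_sq]; try ring_nf; done)

-- ### enumeration of the permutations of `Fin 3`

theorem perm_univ : (Finset.univ : Finset (Equiv.Perm (Fin 3))) =
    {1, swap 0 1, swap 0 2, swap 1 2, swap 0 1 * swap 1 2, swap 1 2 * swap 0 1} := by decide

theorem perm_sum_expand {M : Type*} [AddCommMonoid M] (f : Equiv.Perm (Fin 3) → M) :
    ∑ σ : Equiv.Perm (Fin 3), f σ =
      f 1 + f (swap 0 1) + f (swap 0 2) + f (swap 1 2)
        + f (swap 0 1 * swap 1 2) + f (swap 1 2 * swap 0 1) := by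
  rw [perm_univ]
  rw [Finset.sum_insert (by decide), Finset.sum_insert (by decide),
    Finset.sum_insert (by decide), Finset.sum_insert (by decide),
    Finset.sum_insert (by decide), Finset.sum_singleton]
  abel

theorem e1_0 : (1 : Equiv.Perm (Fin 3)) 0 = 0 := by decide
theorem e1_1 : (1 : Equiv.Perm (Fin 3)) 1 = 1 := by decide
theorem e1_2 : (1 : Equiv.Perm (Fin 3)) 2 = 2 := by decide
theorem e2_0 : (swap (0:Fin 3) 1) 0 = 1 := by decide
theorem e2_1 : (swap (0:Fin 3) 1) 1 = 0 := by decide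
theorem e2_2 : (swap (0:Fin 3) 1) 2 = 2 := by decide
theorem e3_0 : (swap (0:Fin 3) 2) 0 = 2 := by decide
theorem e3_1 : (swap (0:Fin 3) 2) 1 = 1 := by decide
theorem e3_2 : (swap (0:Fin 3) 2) 2 = 0 := by decide
theorem e4_0 : (swap (1:Fin 3) 2) 0 = 0 := by decide
theorem e4_1 : (swap (1:Fin 3) 2) 1 = 2 := by decide
theorem e4_2 : (swap (1:Fin 3) 2) 2 = 1 := by decide
theorem e5_0 : (swap (0:Fin 3) 1 * swap 1 2 : Equiv.Perm (Fin 3)) 0 = 1 := by decide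
theorem e5_1 : (swap (0:Fin 3) 1 * swap 1 2 : Equiv.Perm (Fin 3)) 1 = 2 := by decide
theorem e5_2 : (swap (0:Fin 3) 1 * swap 1 2 : Equiv.Perm (Fin 3)) 2 = 0 := by decide
theorem e6_0 : (swap (1:Fin 3) 2 * swap 0 1 : Equiv.Perm (Fin 3)) 0 = 2 := by decide
theorem e6_1 : (swap (1:Fin 3) 2 * swap 0 1 : Equiv.Perm (Fin 3)) 1 = 0 := by decide
theorem e6_2 : (swap (1:Fin 3) 2 * swap 0 1 : Equiv.Perm (Fin 3)) 2 = 1 := by decide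
theorem s1 : Equiv.Perm.sign (1 : Equiv.Perm (Fin 3)) = 1 := by decide
theorem s2 : Equiv.Perm.sign (swap (0:Fin 3) 1) = -1 := by decide
theorem s3 : Equiv.Perm.sign (swap (0:Fin 3) 2) = -1 := by decide
theorem s4 : Equiv.Perm.sign (swap (1:Fin 3) 2) = -1 := by decide
theorem s5 : Equiv.Perm.sign (swap (0:Fin 3) 1 * swap 1 2) = 1 := by decide
theorem s6 : Equiv.Perm.sign (swap (1:Fin 3) 2 * swap 0 1) = 1 := by decide

def lev : Fin 3 → Fin 3 → Fin 3 → ℤ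
  | 0,1,2 => 1 | 1,2,0 => 1 | 2,0,1 => 1 | 0,2,1 => -1 | 2,1,0 => -1 | 1,0,2 => -1 | _,_,_ => 0

theorem RmXY_eq (m : ℕ) (c : ℝ) (i j : Fin 3) :
    RmXY m c i j = ∑ k : Fin 3, ((-(c:ℂ)/2) * ((lev i j k : ℤ) : ℂ)) • rho0 m (stdBasis3 k) := by
  rw [RmXY, perm_sum_expand, Fin.sum_univ_three]
  simp only [e1_0, e1_1, e1_2, e2_0, e2_1, e2_2, e3_0, e3_1, e3_2, e4_0, e4_1, e4_2,
    e5_0, e5_1, e5_2, e6_0, e6_1, e6_2, s1, s2, s3, s4, s5, s6]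
  fin_cases i <;> fin_cases j <;>
    · simp only [constCurv, lev]
      simp only [Fin.reduceEq, reduceIte, Int.cast_one, Int.cast_neg, Int.cast_zero]
      push_cast
      module

theorem part1 (m : ℕ) (c : ℝ) :
    (∑ σ : Equiv.Perm (Fin 3),
        (((Equiv.Perm.sign σ : ℤ) : ℂ)) • (rho0 m (stdBasis3 (σ 0)) * RmXY m c (σ 1) (σ 2)))
      = (-(c : ℂ)) • ∑ i : Fin 3, rho0 m (stdBasis3 i) * rho0 m (stdBasis3 i) := by
  rw [perm_sum_expand, Fin.sum_univ_three]
  simp only [e1_0, e1_1, e1_2, e2_0, e2_1, e2_2, e3_0, e3_1, e3_2, e4_0, e4_1, e4_2,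
    e5_0, e5_1, e5_2, e6_0, e6_1, e6_2, s1, s2, s3, s4, s5, s6]
  simp only [RmXY_eq, Fin.sum_univ_three, lev]
  simp only [Int.cast_one, Int.cast_neg, Int.cast_zero, mul_zero, zero_smul, add_zero, zero_add,
    mul_one, mul_neg, neg_smul, Matrix.mul_add, Matrix.mul_smul, Matrix.mul_neg, smul_smul]
  module

end Aux

/-- on a 3-manifold of constant curvature `c`, the curvature endomorphism
`R_m⁰ = ∑_{σ∈S₃} sgn(σ) ρ_m⁰(e_{σ(1)}) R_m(e_{σ(2)}, e_{σ(3)})` equals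
`-c∑ᵢ ρ_m⁰(eᵢ)² = m(m+2)c·Id` on `V_m`. -/
theorem constant_curvature_Rm0 (m : ℕ) (c : ℝ) :
    (∑ σ : Equiv.Perm (Fin 3),
        (((Equiv.Perm.sign σ : ℤ) : ℂ)) • (rho0 m (stdBasis3 (σ 0)) * RmXY m c (σ 1) (σ 2)))
      = (-(c : ℂ)) • ∑ i : Fin 3, rho0 m (stdBasis3 i) * rho0 m (stdBasis3 i)
    ∧ (∑ σ : Equiv.Perm (Fin 3),
        (((Equiv.Perm.sign σ : ℤ) : ℂ)) • (rho0 m (stdBasis3 (σ 0)) * RmXY m c (σ 1) (σ 2)))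
      = ((m : ℂ) * ((m : ℂ) + 2) * (c : ℂ)) • (1 : Matrix (Fin (m + 1)) (Fin (m + 1)) ℂ) := by
  refine ⟨part1 m c, ?_⟩
  rw [part1 m c, casimir m, smul_smul]
  congr 1
  ring
end
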